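/- Let d ≥ 3 and k ≥ 1. If φ : [-1,1] × [0,∞) → ℝ belongs to P(𝕊^d × ℝ^k), with Gegenbauer expansion φ(x,t) = ∑_n f_n(t) C_n^{(d-1)/2}(x) (f_n ∈ P(ℝ^k), ∑ f_n(0)C_n^{(d-1)/2}(1) < ∞), and φ is differentiable in x with ∂φ/∂x admitting the uniformly convergent expansion ∑_n h_n(t) C_n^{(d+1)/2}(x), then h_{n-1}(t) = (d-1) f_n(t) for all n ≥ 1 and t ≥ 0; consequently D₁φ := ∂φ/∂x belongs to P(𝕊^{d+2} × ℝ^k). -/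

import Mathlib

open MeasureTheory Filter

noncomputable section

/-- Gegenbauer (ultraspherical) polynomial `C_n^lam`, defined via the standard recurrence
equivalent to the generating function `(1 - 2xt + t²)^{-lam} = ∑ C_n^lam(x) t^n`. -/
def gegenbauer (lam : ℝ) : ℕ → ℝ → ℝ
  | 0 => fun _ => 1
  | 1 => fun x => 2 * lam * x
  | (n + 2) => fun x =>
      (2 * x * ((n : ℝ) + 1 + lam) * gegenbauer lam (n + 1) x
        - ((n : ℝ) + 2 * lam) * gegenbauer lam n x) / ((n : ℝ) + 2)

/-- Positive definiteness of a real kernel on a set `X`. -/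
def IsPosDefKernel {X : Type*} (C : X → X → ℝ) : Prop :=
  ∀ (N : ℕ) (x : Fin N → X) (a : Fin N → ℝ),
    0 ≤ ∑ i, ∑ j, a i * C (x i) (x j) * a j

/-- The class `P(ℝ^k)`: continuous `f : [0,∞) → ℝ` whose radial extension
`(x,y) ↦ f (dist x y)` is positive definite on `ℝ^k`. -/
def radPD (k : ℕ) (f : ℝ → ℝ) : Prop :=
  ContinuousOn f (Set.Ici 0) ∧
  IsPosDefKernel (fun x y : EuclideanSpace ℝ (Fin k) => f (dist x y))

/-- The class `P(𝕊^d × ℝ^k)` via the Berg–Porcu characterization: `φ` has a Gegenbauer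
expansion `φ(x,t) = ∑ f_n(t) C_n^{(d-1)/2}(x)` with `f_n ∈ P(ℝ^k)` and
`∑ f_n(0) C_n^{(d-1)/2}(1) < ∞`. -/
def memPSphereRk (d k : ℕ) (φ : ℝ → ℝ → ℝ) : Prop :=
  ∃ f : ℕ → ℝ → ℝ,
    (∀ n, radPD k (f n)) ∧
    Summable (fun n => f n 0 * gegenbauer (((d : ℝ) - 1) / 2) n 1) ∧
    ∀ x ∈ Set.Icc (-1 : ℝ) 1, ∀ t, 0 ≤ t →
      φ x t = ∑' n, f n t * gegenbauer (((d : ℝ) - 1) / 2) n x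

/-! For fixed `t`, test `∂φ/∂x = ∑ h_n C_n^{λ+1}` (with `λ = (d-1)/2`) against `C_m^{λ+1}` in
the weight `(1 - x²)^{λ+1/2}`, i.e. `sin^{d+1} θ dθ` after `x = cos θ`, and integrate by parts to
move the derivative onto the weight. Since `|f_n(t)| ≤ f_n(0)` and `|C_n^λ| ≤ C_n^λ(1)` on
`[-1, 1]`, the expansion of `φ` converges uniformly and the integral can be taken termwise;
integrating each term back by parts, `(C_n^λ)' = 2λ C_{n-1}^{λ+1}` and orthogonality single out
`n = m + 1`, so `h_m ‖C_m^{λ+1}‖² = 2λ f_{m+1} ‖C_m^{λ+1}‖²`. Both orthogonality and the bound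
`|C_n^λ| ≤ C_n^λ(1)` come from the Gegenbauer differential equation. -/

open Real Set
open scoped ContDiff

lemma intervalIntegral_tsum_mul {F : ℕ → ℝ → ℝ} {M : ℕ → ℝ} (hF : ∀ n, Continuous (F n))
    (hM : Summable M) (hFM : ∀ n θ, |F n θ| ≤ M n) {W : ℝ → ℝ} (hW : Continuous W) (a b : ℝ) :
    ∫ θ in a..b, (∑' n, F n θ) * W θ = ∑' n, ∫ θ in a..b, F n θ * W θ := by
  refine (intervalIntegral.hasSum_integral_of_dominated_convergence (fun n θ => M n * |W θ|)
    (fun n => ((hF n).mul hW).aestronglyMeasurable) (fun n => ae_of_all _ fun θ _ => ?_)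
    (ae_of_all _ fun θ _ => hM.mul_right _) ?_ (ae_of_all _ fun θ _ => ?_)).tsum_eq.symm
  · rw [Pi.mul_apply, Real.norm_eq_abs, abs_mul]
    exact mul_le_mul_of_nonneg_right (hFM n θ) (abs_nonneg _)
  · simp_rw [tsum_mul_right]
    exact (continuous_const.mul hW.abs).intervalIntegrable a b
  · exact (Summable.of_norm_bounded hM fun n => hFM n θ).hasSum.mul_right (W θ)

lemma integral_comp_cos_mul_sin_mul {g G K : ℝ → ℝ}
    (hg : ∀ x ∈ Icc (-1 : ℝ) 1, HasDerivAt g (G x) x) (hG : ContinuousOn G (Icc (-1) 1))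
    (hK : ContDiff ℝ 1 K) (hK0 : K 0 = 0) (hKπ : K π = 0) :
    ∫ θ in (0 : ℝ)..π, G (cos θ) * sin θ * K θ = ∫ θ in (0 : ℝ)..π, g (cos θ) * deriv K θ := by
  have hGcos : Continuous fun θ => G (cos θ) := hG.comp_continuous continuous_cos cos_mem_Icc
  rw [intervalIntegral.integral_mul_deriv_eq_deriv_mul (u := fun θ => g (cos θ))
    (fun θ _ => (hg _ (cos_mem_Icc θ)).comp θ (hasDerivAt_cos θ))
    (fun θ _ => (hK.differentiable one_ne_zero θ).hasDerivAt)
    ((hGcos.mul continuous_sin.neg).intervalIntegrable 0 π)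
    ((hK.continuous_deriv le_rfl).intervalIntegrable 0 π),
    hK0, hKπ, mul_zero, mul_zero, sub_zero, zero_sub, ← intervalIntegral.integral_neg]
  congr 1 with θ
  ring

lemma IsPosDefKernel.two_point_nonneg {X : Type*} {C : X → X → ℝ} (hC : IsPosDefKernel C) (x y : X)
    (s : ℝ) : 0 ≤ C x x + s * C x y + s * C y x + s ^ 2 * C y y := by
  have := hC 2 ![x, y] ![1, s]
  simp only [Fin.sum_univ_two, Matrix.cons_val_zero, Matrix.cons_val_one] at this
  linarith

namespace radPD

variable {k : ℕ} {f : ℝ → ℝ}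

lemma apply_zero_nonneg (hf : radPD k f) : 0 ≤ f 0 := by
  simpa using hf.2 1 (fun _ => 0) (fun _ => 1)

lemma abs_apply_le (hf : radPD k f) (hk : 1 ≤ k) {t : ℝ} (ht : 0 ≤ t) : |f t| ≤ f 0 := by
  obtain ⟨j, rfl⟩ : ∃ j, k = j + 1 := ⟨k - 1, by omega⟩
  obtain ⟨x, hx⟩ := exists_norm_eq (EuclideanSpace ℝ (Fin (j + 1))) ht
  have h := hf.2.two_point_nonneg 0 x
  simp only [dist_self, dist_zero_left, dist_zero_right, hx] at h
  rw [_root_.abs_le]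
  constructor <;> nlinarith [h 1, h (-1)]

lemma const_mul (hf : radPD k f) {c : ℝ} (hc : 0 ≤ c) : radPD k fun t => c * f t := by
  refine ⟨continuousOn_const.mul hf.1, fun N x a => ?_⟩
  have := mul_nonneg hc (hf.2 N x a)
  simpa only [Finset.mul_sum, mul_assoc, mul_left_comm c] using this

end radPD

section Recurrences

variable (lam : ℝ)

@[simp] lemma gegenbauer_zero (x : ℝ) : gegenbauer lam 0 x = 1 := rfl

@[simp] lemma gegenbauer_one (x : ℝ) : gegenbauer lam 1 x = 2 * lam * x := rfl

lemma gegenbauer_add_two (n : ℕ) (x : ℝ) :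
    gegenbauer lam (n + 2) x =
      (2 * x * ((n : ℝ) + 1 + lam) * gegenbauer lam (n + 1) x
        - ((n : ℝ) + 2 * lam) * gegenbauer lam n x) / ((n : ℝ) + 2) := rfl

lemma gegenbauer_recurrence (n : ℕ) (x : ℝ) :
    ((n : ℝ) + 2) * gegenbauer lam (n + 2) x =
      2 * x * ((n : ℝ) + 1 + lam) * gegenbauer lam (n + 1) x
        - ((n : ℝ) + 2 * lam) * gegenbauer lam n x := by
  rw [gegenbauer_add_two]
  field_simp

lemma gegenbauer_neg (n : ℕ) (x : ℝ) : gegenbauer lam n (-x) = (-1) ^ n * gegenbauer lam n x := by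
  induction n using Nat.twoStepInduction with
  | zero => simp
  | one => simp
  | more n h₀ h₁ => rw [gegenbauer_add_two, gegenbauer_add_two, h₀, h₁]; ring

lemma one_sub_sq_mul_gegenbauer_param_succ (n : ℕ) (x : ℝ) :
    2 * lam * (1 - x ^ 2) * gegenbauer (lam + 1) n x
      = (n + 2 * lam) * gegenbauer lam n x - (n + 1) * x * gegenbauer lam (n + 1) x := by
  induction n using Nat.twoStepInduction with
  | zero => simp; ring
  | one => simp [gegenbauer_add_two]; ring
  | more n h₀ h₁ =>
    have hn : ((n : ℝ) + 2) ≠ 0 := by positivity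
    apply mul_left_cancel₀ hn
    have := gegenbauer_recurrence lam (n + 1) x
    push_cast at h₀ h₁ this ⊢
    linear_combination 2 * lam * (1 - x ^ 2) * gegenbauer_recurrence (lam + 1) n x
      + 2 * x * (n + 2 + lam) * h₁ - (n + 2 * lam + 2) * h₀ + (n + 2) * x * this
      - (n + 2 + 2 * lam) * gegenbauer_recurrence lam n x

lemma gegenbauer_succ_eq_param_succ (n : ℕ) (x : ℝ) :
    (n + 1 + 2 * lam) * gegenbauer lam (n + 1) x
      = 2 * lam * (gegenbauer (lam + 1) (n + 1) x - x * gegenbauer (lam + 1) n x) := by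
  induction n using Nat.twoStepInduction with
  | zero => simp; ring
  | one => simp [gegenbauer_add_two]; ring
  | more n _ h₁ =>
    have hn : ((n : ℝ) + 3) ≠ 0 := by positivity
    apply mul_left_cancel₀ hn
    have R := gegenbauer_recurrence lam (n + 1) x
    have R' := gegenbauer_recurrence (lam + 1) (n + 1) x
    have I := one_sub_sq_mul_gegenbauer_param_succ lam (n + 1) x
    push_cast at h₁ R R' I ⊢
    linear_combination (n + 3 + 2 * lam) * R - 2 * lam * R' + (n + 3 + 2 * lam) * x * h₁
      + (n + 3 + 2 * lam) * I

lemma gegenbauer_add_two_eq_param_succ (n : ℕ) (x : ℝ) :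
    (n + 2) * gegenbauer lam (n + 2) x
      = 2 * lam * (x * gegenbauer (lam + 1) (n + 1) x - gegenbauer (lam + 1) n x) := by
  linear_combination gegenbauer_recurrence lam n x + x * gegenbauer_succ_eq_param_succ lam n x
    + one_sub_sq_mul_gegenbauer_param_succ lam n x

lemma gegenbauer_add_two_eq_param_succ_sub (n : ℕ) (x : ℝ) :
    (n + 2 + lam) * gegenbauer lam (n + 2) x
      = lam * (gegenbauer (lam + 1) (n + 2) x - gegenbauer (lam + 1) n x) := by
  have := gegenbauer_succ_eq_param_succ lam (n + 1) x
  push_cast at this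
  linear_combination (gegenbauer_add_two_eq_param_succ lam n x + this) / 2

end Recurrences

section Derivatives

variable (lam : ℝ)

lemma contDiff_gegenbauer (n : ℕ) : ContDiff ℝ ω (gegenbauer lam n) := by
  induction n using Nat.twoStepInduction with
  | zero => exact contDiff_const
  | one => exact contDiff_const.mul contDiff_id
  | more n h₀ h₁ =>
    rw [show gegenbauer lam (n + 2) = _ from funext (gegenbauer_add_two lam n)]
    fun_prop

lemma hasDerivAt_gegenbauer (n : ℕ) (x : ℝ) :
    HasDerivAt (gegenbauer lam n) (deriv (gegenbauer lam n) x) x :=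
  ((contDiff_gegenbauer lam n).differentiable (by simp)).differentiableAt.hasDerivAt

lemma hasDerivAt_deriv_gegenbauer (n : ℕ) (x : ℝ) :
    HasDerivAt (deriv (gegenbauer lam n)) (deriv (deriv (gegenbauer lam n)) x) x :=
  ((contDiff_gegenbauer lam n).of_le le_top).differentiable_deriv_two.differentiableAt.hasDerivAt

lemma continuous_gegenbauer (n : ℕ) : Continuous (gegenbauer lam n) :=
  (contDiff_gegenbauer lam n).continuous

lemma hasDerivAt_gegenbauer_succ (n : ℕ) (x : ℝ) :
    HasDerivAt (gegenbauer lam (n + 1)) (2 * lam * gegenbauer (lam + 1) n x) x := by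
  induction n using Nat.twoStepInduction generalizing x with
  | zero => exact ((hasDerivAt_id x).const_mul (2 * lam)).congr_deriv (by simp)
  | one =>
    rw [show gegenbauer lam 2 = fun y => 2 * lam * (1 + lam) * y ^ 2 - lam from
      funext fun y => by simp [gegenbauer_add_two]; ring]
    exact (((hasDerivAt_pow 2 x).const_mul (2 * lam * (1 + lam))).sub_const lam).congr_deriv
      (by simp; ring)
  | more n h₀ h₁ =>
    rw [show gegenbauer lam (n + 2 + 1) = _ from funext (gegenbauer_add_two lam (n + 1))]
    refine (((((hasDerivAt_id x).const_mul 2).mul_const _).mul (h₁ x)).sub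
      ((h₀ x).const_mul _)).div_const _ |>.congr_deriv ?_
    rw [div_eq_iff (by positivity), id]
    have := gegenbauer_add_two_eq_param_succ_sub lam n x
    push_cast at this ⊢
    linear_combination 2 * this - 2 * lam * gegenbauer_recurrence (lam + 1) n x

lemma deriv_gegenbauer_succ (n : ℕ) :
    deriv (gegenbauer lam (n + 1)) = fun x => 2 * lam * gegenbauer (lam + 1) n x :=
  funext fun x => (hasDerivAt_gegenbauer_succ lam n x).deriv

lemma deriv_gegenbauer_zero : deriv (gegenbauer lam 0) = 0 := by
  funext x; exact deriv_const x 1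

lemma gegenbauer_ode (n : ℕ) (x : ℝ) :
    (1 - x ^ 2) * deriv (deriv (gegenbauer lam n)) x
      - (2 * lam + 1) * x * deriv (gegenbauer lam n) x
      + n * (n + 2 * lam) * gegenbauer lam n x = 0 := by
  rcases n with _ | _ | n
  · simp [deriv_gegenbauer_zero]
  · simp [deriv_gegenbauer_succ]; ring
  · have := one_sub_sq_mul_gegenbauer_param_succ (lam + 1) n x
    simp only [deriv_gegenbauer_succ, deriv_const_mul_field', Nat.cast_add]
    push_cast at this ⊢
    linear_combination 2 * lam * this + (n + 2 + 2 * lam) * gegenbauer_add_two_eq_param_succ lam n x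

end Derivatives

section Bounds

variable (lam : ℝ)

lemma succ_mul_gegenbauer_succ_one (n : ℕ) :
    (n + 1) * gegenbauer lam (n + 1) 1 = (n + 2 * lam) * gegenbauer lam n 1 := by
  induction n with
  | zero => simp
  | succ n ih =>
    push_cast at ih ⊢
    linear_combination gegenbauer_recurrence lam n 1 + ih

variable {lam}

lemma gegenbauer_one_pos (hlam : 0 < lam) (n : ℕ) : 0 < gegenbauer lam n 1 := by
  induction n with
  | zero => simp
  | succ n ih =>
    have h : 0 < (n + 1) * gegenbauer lam (n + 1) 1 := by
      rw [succ_mul_gegenbauer_succ_one]; positivity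
    exact (pos_iff_pos_of_mul_pos h).1 (by positivity)

/-- The derivative of this energy has the sign of `y`, so on `[-1, 1]` the energy is maximal at
`±1`, where it equals `C_n^λ(1)²`. -/
lemma hasDerivAt_gegenbauer_energy (n : ℕ) (y : ℝ) (hK : (n : ℝ) * (n + 2 * lam) ≠ 0) :
    HasDerivAt (fun y => gegenbauer lam n y ^ 2
        + (1 - y ^ 2) * deriv (gegenbauer lam n) y ^ 2 / (n * (n + 2 * lam)))
      (4 * lam * y * deriv (gegenbauer lam n) y ^ 2 / (n * (n + 2 * lam))) y := by
  refine (((hasDerivAt_gegenbauer lam n y).pow 2).add ((((hasDerivAt_pow 2 y).const_sub 1).mul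
    ((hasDerivAt_deriv_gegenbauer lam n y).pow 2)).div_const _)).congr_deriv ?_
  simp only [Pi.pow_apply]
  rw [eq_div_iff hK, add_mul, div_mul_cancel₀ _ hK]
  norm_num
  linear_combination (2 * deriv (gegenbauer lam n) y) * gegenbauer_ode lam n y

lemma abs_gegenbauer_le (hlam : 0 < lam) (n : ℕ) {x : ℝ} (hx : x ∈ Icc (-1 : ℝ) 1) :
    |gegenbauer lam n x| ≤ gegenbauer lam n 1 := by
  rcases Nat.eq_zero_or_pos n with rfl | hn
  · simp
  have hK : 0 < (n : ℝ) * (n + 2 * lam) := by positivity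
  set E := fun y => gegenbauer lam n y ^ 2
    + (1 - y ^ 2) * deriv (gegenbauer lam n) y ^ 2 / (n * (n + 2 * lam))
  have hE := fun y => hasDerivAt_gegenbauer_energy n y hK.ne'
  have hEc : Continuous E := continuous_iff_continuousAt.2 fun y => (hE y).continuousAt
  have hmono : MonotoneOn E (Icc 0 1) :=
    monotoneOn_of_hasDerivWithinAt_nonneg (convex_Icc 0 1) hEc.continuousOn
      (fun y _ => (hE y).hasDerivWithinAt) fun y hy => by
        rw [interior_Icc] at hy; have := hy.1.le; positivity
  have hanti : AntitoneOn E (Icc (-1) 0) :=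
    antitoneOn_of_hasDerivWithinAt_nonpos (convex_Icc (-1) 0) hEc.continuousOn
      (fun y _ => (hE y).hasDerivWithinAt) fun y hy => by
        rw [interior_Icc] at hy
        exact div_nonpos_of_nonpos_of_nonneg
          (mul_nonpos_of_nonpos_of_nonneg (by nlinarith [hy.2]) (sq_nonneg _)) hK.le
  have hEx : gegenbauer lam n x ^ 2 ≤ E x := by
    have : 0 ≤ (1 - x ^ 2) * deriv (gegenbauer lam n) x ^ 2 / (n * (n + 2 * lam)) := by
      have : 0 ≤ 1 - x ^ 2 := by nlinarith [hx.1, hx.2]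
      positivity
    simp only [E]; linarith
  have hEmax : E x ≤ gegenbauer lam n 1 ^ 2 := by
    rcases le_total 0 x with hx0 | hx0
    · simpa [E] using hmono ⟨hx0, hx.2⟩ ⟨zero_le_one, le_rfl⟩ hx.2
    · simpa [E, gegenbauer_neg, mul_pow, ← pow_mul]
        using hanti ⟨le_rfl, by norm_num⟩ ⟨hx.1, hx0⟩ hx.1
  exact abs_le_of_sq_le_sq (hEx.trans hEmax) (gegenbauer_one_pos hlam n).le

lemma abs_mul_gegenbauer_le (hlam : 0 < lam) {c C : ℝ} (hc : |c| ≤ C) (n : ℕ) {x : ℝ}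
    (hx : x ∈ Icc (-1 : ℝ) 1) : |c * gegenbauer lam n x| ≤ C * gegenbauer lam n 1 := by
  rw [abs_mul]
  exact mul_le_mul hc (abs_gegenbauer_le hlam n hx) (abs_nonneg _) ((abs_nonneg c).trans hc)

end Bounds

section Orthogonality

variable {lam : ℝ}

lemma hasDerivAt_gegenbauer_wronskian {e : ℕ} (he : (e : ℝ) = 2 * lam) (n m : ℕ) (θ : ℝ) :
    HasDerivAt (fun θ => sin θ ^ (e + 1) *
      (gegenbauer lam n (cos θ) * deriv (gegenbauer lam m) (cos θ)
        - deriv (gegenbauer lam n) (cos θ) * gegenbauer lam m (cos θ)))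
      ((m * (m + 2 * lam) - n * (n + 2 * lam)) *
        (gegenbauer lam n (cos θ) * gegenbauer lam m (cos θ) * sin θ ^ e)) θ := by
  have hcomp {F F' : ℝ → ℝ} (hF : HasDerivAt F (F' (cos θ)) (cos θ)) :
      HasDerivAt (fun θ => F (cos θ)) (F' (cos θ) * -sin θ) θ :=
    hF.comp θ (hasDerivAt_cos θ)
  refine (((hasDerivAt_sin θ).pow (e + 1)).mul
    (((hcomp (hasDerivAt_gegenbauer lam n _)).mul (hcomp (hasDerivAt_deriv_gegenbauer lam m _))).sub
      ((hcomp (hasDerivAt_deriv_gegenbauer lam n _)).mul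
        (hcomp (hasDerivAt_gegenbauer lam m _))))).congr_deriv ?_
  have hsin : sin θ ^ 2 = 1 - cos θ ^ 2 := by rw [← sin_sq_add_cos_sq θ]; ring
  simp only [Pi.mul_apply, Pi.sub_apply, Pi.pow_apply, Nat.add_sub_cancel, Nat.cast_add,
    Nat.cast_one, pow_succ]
  symm
  linear_combination (-(sin θ ^ e * gegenbauer lam m (cos θ))) * gegenbauer_ode lam n (cos θ)
    + (sin θ ^ e * gegenbauer lam n (cos θ)) * gegenbauer_ode lam m (cos θ)
    + sin θ ^ e * (gegenbauer lam n (cos θ) * deriv (deriv (gegenbauer lam m)) (cos θ)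
      - deriv (deriv (gegenbauer lam n)) (cos θ) * gegenbauer lam m (cos θ)) * hsin
    + cos θ * sin θ ^ e * (deriv (gegenbauer lam n) (cos θ) * gegenbauer lam m (cos θ)
      - gegenbauer lam n (cos θ) * deriv (gegenbauer lam m) (cos θ)) * he

lemma continuous_gegenbauer_cos (n : ℕ) : Continuous fun θ => gegenbauer lam n (cos θ) :=
  (continuous_gegenbauer lam n).comp continuous_cos

lemma integral_gegenbauer_mul_gegenbauer_eq_zero {e : ℕ} (he : (e : ℝ) = 2 * lam) {n m : ℕ}
    (hnm : n ≠ m) :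
    ∫ θ in (0 : ℝ)..π, gegenbauer lam n (cos θ) * gegenbauer lam m (cos θ) * sin θ ^ e = 0 := by
  have hint := intervalIntegral.integral_eq_sub_of_hasDerivAt
    (fun θ _ => hasDerivAt_gegenbauer_wronskian he n m θ)
    ((continuous_const.mul (((continuous_gegenbauer_cos n).mul (continuous_gegenbauer_cos m)).mul
      (continuous_sin.pow e))).intervalIntegrable 0 π)
  rw [intervalIntegral.integral_const_mul, sin_pi, sin_zero, zero_pow (Nat.succ_ne_zero e)] at hint
  have hcoeff : (m * (m + 2 * lam) - n * (n + 2 * lam) : ℝ) ≠ 0 := by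
    have hsum : (0 : ℝ) < m + n + e := by
      have : 0 < m + n + e := by omega
      exact_mod_cast this
    have hdiff : (m : ℝ) - n ≠ 0 := sub_ne_zero.2 (Nat.cast_injective.ne hnm.symm)
    rw [show (m * (m + 2 * lam) - n * (n + 2 * lam) : ℝ) = (m - n) * (m + n + e) by rw [he]; ring]
    exact mul_ne_zero hdiff hsum.ne'
  simpa [hcoeff] using hint

lemma integral_gegenbauer_mul_self_pos (hlam : 0 < lam) (e m : ℕ) :
    0 < ∫ θ in (0 : ℝ)..π, gegenbauer lam m (cos θ) * gegenbauer lam m (cos θ) * sin θ ^ e := by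
  have hc : Continuous fun θ => gegenbauer lam m (cos θ) * gegenbauer lam m (cos θ) * sin θ ^ e :=
    ((continuous_gegenbauer_cos m).mul (continuous_gegenbauer_cos m)).mul (continuous_sin.pow e)
  have hnonneg : 0 ≤ᵐ[volume.restrict (uIoc 0 π)]
      fun θ => gegenbauer lam m (cos θ) * gegenbauer lam m (cos θ) * sin θ ^ e := by
    refine ae_restrict_of_forall_mem measurableSet_uIoc fun θ hθ => ?_
    rw [uIoc_of_le pi_pos.le] at hθ
    have := sin_nonneg_of_nonneg_of_le_pi hθ.1.le hθ.2
    have := mul_self_nonneg (gegenbauer lam m (cos θ))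
    positivity
  -- `C_m(cos θ) → C_m(1) > 0` as `θ → 0⁺`, so the integrand is positive somewhere in `(0, π)`.
  obtain ⟨θ, hθpos, hθ⟩ := ((((continuous_gegenbauer_cos m).tendsto 0).eventually
    (lt_mem_nhds (by simpa using gegenbauer_one_pos hlam m))).filter_mono nhdsWithin_le_nhds
      |>.and (Ioo_mem_nhdsGT pi_pos)).exists
  have hsupp : θ ∈ Function.support fun θ =>
      gegenbauer lam m (cos θ) * gegenbauer lam m (cos θ) * sin θ ^ e :=
    (mul_pos (mul_pos hθpos hθpos) (pow_pos (sin_pos_of_pos_of_lt_pi hθ.1 hθ.2) e)).ne'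
  rw [intervalIntegral.integral_pos_iff_support_of_nonneg_ae' hnonneg (hc.intervalIntegrable 0 π)]
  exact ⟨pi_pos, ((hc.isOpen_support.inter isOpen_Ioo).measure_pos volume ⟨θ, hsupp, hθ⟩).trans_le
    (measure_mono (inter_subset_inter_right _ Ioo_subset_Ioc_self))⟩

end Orthogonality

section Coefficients

variable {lam : ℝ} {e : ℕ}

lemma integral_tsum_gegenbauer_mul_weight (he : (e : ℝ) = 2 * lam) {c C : ℕ → ℝ}
    (hC : Summable C) (hcC : ∀ n, ∀ x ∈ Icc (-1 : ℝ) 1, |c n * gegenbauer lam n x| ≤ C n)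
    (m : ℕ) :
    ∫ θ in (0 : ℝ)..π,
        (∑' n, c n * gegenbauer lam n (cos θ)) * (gegenbauer lam m (cos θ) * sin θ ^ e)
      = c m * ∫ θ in (0 : ℝ)..π,
          gegenbauer lam m (cos θ) * gegenbauer lam m (cos θ) * sin θ ^ e := by
  rw [intervalIntegral_tsum_mul (F := fun n θ => c n * gegenbauer lam n (cos θ))
    (W := fun θ => gegenbauer lam m (cos θ) * sin θ ^ e)
    (fun n => continuous_const.mul (continuous_gegenbauer_cos n)) hC
    (fun n θ => hcC n _ (cos_mem_Icc θ)) ((continuous_gegenbauer_cos m).mul (continuous_sin.pow e))]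
  refine (tsum_eq_single m fun n hn => ?_).trans ?_
  · simp_rw [mul_assoc, intervalIntegral.integral_const_mul, ← mul_assoc,
      integral_gegenbauer_mul_gegenbauer_eq_zero he hn, mul_zero]
  · simp_rw [mul_assoc, intervalIntegral.integral_const_mul]

lemma contDiff_gegenbauer_weight (n e : ℕ) :
    ContDiff ℝ 1 fun θ => gegenbauer lam n (cos θ) * sin θ ^ e :=
  (((contDiff_gegenbauer lam n).comp contDiff_cos).mul (contDiff_sin.pow e)).of_le le_top

lemma integral_gegenbauer_cos_mul_deriv_weight (n m : ℕ) :
    ∫ θ in (0 : ℝ)..π, gegenbauer lam n (cos θ) *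
        deriv (fun θ => gegenbauer (lam + 1) m (cos θ) * sin θ ^ (e + 1)) θ
      = ∫ θ in (0 : ℝ)..π, deriv (gegenbauer lam n) (cos θ) *
          (gegenbauer (lam + 1) m (cos θ) * sin θ ^ (e + 2)) := by
  rw [← integral_comp_cos_mul_sin_mul (fun x _ => hasDerivAt_gegenbauer lam n x)
    (((contDiff_gegenbauer lam n).continuous_deriv le_top).continuousOn)
    (contDiff_gegenbauer_weight m (e + 1)) (by simp) (by simp)]
  congr 1 with θ
  ring

end Coefficients

theorem gegenbauer_coeff_of_hasDerivAt_tsum {lam : ℝ} {e : ℕ} (he : (e : ℝ) = 2 * lam)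
    {a b A B : ℕ → ℝ} (hA : Summable A)
    (haA : ∀ n, ∀ x ∈ Icc (-1 : ℝ) 1, |a n * gegenbauer lam n x| ≤ A n)
    (hB : Summable B) (hbB : ∀ n, ∀ x ∈ Icc (-1 : ℝ) 1, |b n * gegenbauer (lam + 1) n x| ≤ B n)
    (hderiv : ∀ x ∈ Icc (-1 : ℝ) 1, HasDerivAt (fun y => ∑' n, a n * gegenbauer lam n y)
      (∑' n, b n * gegenbauer (lam + 1) n x) x) (m : ℕ) :
    b m = 2 * lam * a (m + 1) := by
  have he' : ((e + 2 : ℕ) : ℝ) = 2 * (lam + 1) := by push_cast; rw [he]; ring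
  set K := fun θ => gegenbauer (lam + 1) m (cos θ) * sin θ ^ (e + 1)
  set I := ∫ θ in (0 : ℝ)..π,
    gegenbauer (lam + 1) m (cos θ) * gegenbauer (lam + 1) m (cos θ) * sin θ ^ (e + 2)
  have hI : 0 < I := integral_gegenbauer_mul_self_pos (by linarith [e.cast_nonneg (α := ℝ)]) _ _
  have hbside : ∫ θ in (0 : ℝ)..π, (∑' n, b n * gegenbauer (lam + 1) n (cos θ)) * sin θ * K θ
      = b m * I := by
    rw [← integral_tsum_gegenbauer_mul_weight he' hB hbB m]
    congr 1 with θ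
    ring
  have haside : ∫ θ in (0 : ℝ)..π, (∑' n, a n * gegenbauer lam n (cos θ)) * deriv K θ
      = a (m + 1) * (2 * lam * I) := by
    rw [intervalIntegral_tsum_mul (F := fun n θ => a n * gegenbauer lam n (cos θ))
      (fun n => continuous_const.mul (continuous_gegenbauer_cos n)) hA
      (fun n θ => haA n _ (cos_mem_Icc θ))
      ((contDiff_gegenbauer_weight m (e + 1)).continuous_deriv le_rfl)]
    simp_rw [mul_assoc, intervalIntegral.integral_const_mul,
      integral_gegenbauer_cos_mul_deriv_weight]
    refine (tsum_eq_single (m + 1) fun n hn => ?_).trans ?_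
    · rcases n with _ | p
      · simp [deriv_gegenbauer_zero]
      · simp_rw [deriv_gegenbauer_succ, mul_assoc, intervalIntegral.integral_const_mul, ← mul_assoc,
          integral_gegenbauer_mul_gegenbauer_eq_zero he' (by omega : p ≠ m), mul_zero]
    · simp_rw [I, deriv_gegenbauer_succ, mul_assoc, intervalIntegral.integral_const_mul]
  have hHcont : ContinuousOn (fun x => ∑' n, b n * gegenbauer (lam + 1) n x) (Icc (-1) 1) :=
    continuousOn_tsum (fun n => (continuous_const.mul (continuous_gegenbauer _ n)).continuousOn)
      hB fun n x hx => hbB n x hx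
  have hibp := integral_comp_cos_mul_sin_mul (K := K) hderiv hHcont
    (contDiff_gegenbauer_weight m (e + 1)) (by simp [K]) (by simp [K])
  rw [hbside, haside] at hibp
  exact mul_right_cancel₀ hI.ne' (hibp.trans (by ring))

theorem descente_D1 (d k : ℕ) (hd : 3 ≤ d) (hk : 1 ≤ k) (f h : ℕ → ℝ → ℝ)
    (hpd : ∀ n, radPD k (f n))
    (hsum : Summable fun n => f n 0 * gegenbauer (((d : ℝ) - 1) / 2) n 1)
    (hderiv : ∀ x ∈ Set.Icc (-1 : ℝ) 1, ∀ t, 0 ≤ t →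
      HasDerivAt (fun y => ∑' n, f n t * gegenbauer (((d : ℝ) - 1) / 2) n y)
        (∑' n, h n t * gegenbauer (((d : ℝ) + 1) / 2) n x) x)
    (hsumh : ∀ t, 0 ≤ t →
      Summable fun n => |h n t| * |gegenbauer (((d : ℝ) + 1) / 2) n 1|) :
    (∀ n, 1 ≤ n → ∀ t, 0 ≤ t → h (n - 1) t = ((d : ℝ) - 1) * f n t) ∧
    memPSphereRk (d + 2) k (fun x t =>
      deriv (fun y => ∑' n, f n t * gegenbauer (((d : ℝ) - 1) / 2) n y) x) := by
  have hlam₀ : 0 < ((d : ℝ) - 1) / 2 := by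
    have : (3 : ℝ) ≤ d := by exact_mod_cast hd
    linarith
  have hlam : ((d : ℝ) + 1) / 2 = ((d : ℝ) - 1) / 2 + 1 := by ring
  have he : ((d - 1 : ℕ) : ℝ) = 2 * (((d : ℝ) - 1) / 2) := by
    rw [Nat.cast_sub (by omega)]; push_cast; ring
  rw [hlam] at hderiv hsumh
  have hcoeff : ∀ t, 0 ≤ t → ∀ m, h m t = ((d : ℝ) - 1) * f (m + 1) t := fun t ht m => by
    refine (gegenbauer_coeff_of_hasDerivAt_tsum he hsum
      (fun n x hx => abs_mul_gegenbauer_le hlam₀ ((hpd n).abs_apply_le hk ht) n hx) (hsumh t ht)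
      (fun n x hx => ?_) (hderiv · · t ht) m).trans (by ring)
    rw [abs_of_pos (gegenbauer_one_pos (by linarith) n)]
    exact abs_mul_gegenbauer_le (by linarith) le_rfl n hx
  have hc : (((d + 2 : ℕ) : ℝ) - 1) / 2 = ((d : ℝ) - 1) / 2 + 1 := by push_cast; ring
  refine ⟨fun n hn t ht => ?_, fun n t => ((d : ℝ) - 1) * f (n + 1) t,
    fun n => (hpd (n + 1)).const_mul (by linarith), ?_, fun x hx t ht => ?_⟩
  · obtain ⟨m, rfl⟩ : ∃ m, n = m + 1 := ⟨n - 1, by omega⟩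
    exact hcoeff t ht m
  · simp only [hc, ← hcoeff 0 le_rfl]
    exact (hsumh 0 le_rfl).of_norm_bounded fun n => (abs_mul _ _).le
  · simp only [hc, (hderiv x hx t ht).deriv, ← hcoeff t ht]
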